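/- Let 0 < μ < L < ∞, let f : ℝ^n → ℝ be L-smooth and μ-strongly convex with minimizer x_⋆ and minimal value f_⋆ = f(x_⋆), and let ε ∈ [0,1). Let x_k ∈ ℝ^n and d_k ∈ ℝ^n with ∇f(x_k) ≠ 0 and d_k ≠ 0, and suppose the angle θ_k between ∇f(x_k) and d_k satisfies |sin θ_k| ≤ ε, i.e., 1 − ⟨∇f(x_k), d_k⟩² / (‖∇f(x_k)‖² ‖d_k‖²) ≤ ε². Let γ_k ∈ ℝ minimize γ ↦ f(x_k − γ d_k) over ℝ and set x_{k+1} = x_k − γ_k d_k. Then f(x_{k+1}) − f_⋆ ≤ ((1 − q_ε)/(1 + q_ε))² (f(x_k) − f_⋆), where q_ε = μ(1 − ε)/(L(1 + ε)). -/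

import Mathlib

open scoped InnerProductSpace

section Helpers

variable {n : ℕ}

private lemma grad_inner_eq (f : EuclideanSpace ℝ (Fin n) → ℝ) (x u : EuclideanSpace ℝ (Fin n)) :
    ⟪gradient f x, u⟫_ℝ = fderiv ℝ f x u := by
  unfold gradient
  exact InnerProductSpace.toDual_symm_apply

private lemma hasDerivAt_line (f : EuclideanSpace ℝ (Fin n) → ℝ) (hdiff : Differentiable ℝ f)
    (x u : EuclideanSpace ℝ (Fin n)) (t : ℝ) :
    HasDerivAt (fun s : ℝ => f (x + s • u)) ⟪gradient f (x + t • u), u⟫_ℝ t := by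
  have hc : HasDerivAt (fun s : ℝ => x + s • u) u t := by
    simpa using ((hasDerivAt_id t).smul_const u).const_add x
  have h := (hdiff (x + t • u)).hasFDerivAt.comp_hasDerivAt t hc
  rw [grad_inner_eq]
  exact h

/-- Descent lemma from Lipschitz gradient. -/
private lemma descent_lemma (f : EuclideanSpace ℝ (Fin n) → ℝ) (L : ℝ) (hL : 0 < L)
    (hdiff : Differentiable ℝ f)
    (hsmooth : ∀ a b, ‖gradient f a - gradient f b‖ ≤ L * ‖a - b‖)
    (x y : EuclideanSpace ℝ (Fin n)) :
    f y ≤ f x + ⟪gradient f x, y - x⟫_ℝ + L / 2 * ‖y - x‖ ^ 2 := by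
  set u : EuclideanSpace ℝ (Fin n) := y - x with hu
  set φ : ℝ → ℝ := fun t => f (x + t • u) - t * ⟪gradient f x, u⟫_ℝ - L / 2 * t ^ 2 * ‖u‖ ^ 2
    with hφ
  have hder : ∀ t : ℝ, HasDerivAt φ
      (⟪gradient f (x + t • u), u⟫_ℝ - ⟪gradient f x, u⟫_ℝ - L * t * ‖u‖ ^ 2) t := by
    intro t
    have h1 := hasDerivAt_line f hdiff x u t
    have h2 : HasDerivAt (fun s : ℝ => s * ⟪gradient f x, u⟫_ℝ) ⟪gradient f x, u⟫_ℝ t := by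
      simpa using (hasDerivAt_id t).mul_const ⟪gradient f x, u⟫_ℝ
    have h3 : HasDerivAt (fun s : ℝ => L / 2 * s ^ 2 * ‖u‖ ^ 2) (L * t * ‖u‖ ^ 2) t := by
      have h4 := ((hasDerivAt_pow 2 t).const_mul (L / 2)).mul_const (‖u‖ ^ 2)
      refine h4.congr_deriv ?_
      simp only [Nat.reduceSub, pow_one]
      ring
    exact (h1.sub h2).sub h3
  have hmono : AntitoneOn φ (Set.Icc 0 1) := by
    apply antitoneOn_of_deriv_nonpos (convex_Icc 0 1)
    · exact fun t _ => ((hder t).differentiableAt).continuousAt.continuousWithinAt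
    · exact fun t _ => ((hder t).differentiableAt).differentiableWithinAt
    · intro t ht
      rw [interior_Icc] at ht
      rw [(hder t).deriv]
      have hb : ⟪gradient f (x + t • u) - gradient f x, u⟫_ℝ ≤ L * t * ‖u‖ ^ 2 := by
        calc ⟪gradient f (x + t • u) - gradient f x, u⟫_ℝ
            ≤ ‖gradient f (x + t • u) - gradient f x‖ * ‖u‖ := real_inner_le_norm _ _
          _ ≤ (L * ‖(x + t • u) - x‖) * ‖u‖ := by
              apply mul_le_mul_of_nonneg_right _ (norm_nonneg u)
              exact hsmooth _ _
          _ = L * t * ‖u‖ ^ 2 := by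
              rw [add_sub_cancel_left, norm_smul, Real.norm_eq_abs,
                abs_of_pos ht.1]
              ring
      rw [inner_sub_left] at hb
      linarith
  have h01 : φ 1 ≤ φ 0 := hmono (Set.mem_Icc.2 ⟨le_refl 0, zero_le_one⟩)
    (Set.mem_Icc.2 ⟨zero_le_one, le_refl 1⟩) zero_le_one
  have he0 : φ 0 = f x := by simp [hφ]
  have he1 : φ 1 = f y - ⟪gradient f x, y - x⟫_ℝ - L / 2 * ‖y - x‖ ^ 2 := by
    simp [hφ, hu]
  rw [he0, he1] at h01
  linarith

/-- Interpolation inequality for L-smooth μ-strongly convex functions (division-free form). -/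
private lemma interp_ineq (f : EuclideanSpace ℝ (Fin n) → ℝ) (μ L : ℝ) (hμ : 0 < μ)
    (hμL : μ < L) (hdiff : Differentiable ℝ f)
    (hsmooth : ∀ a b, ‖gradient f a - gradient f b‖ ≤ L * ‖a - b‖)
    (hsc : ∀ a b, f a ≥ f b + ⟪gradient f b, a - b⟫_ℝ + μ / 2 * ‖a - b‖ ^ 2)
    (a b : EuclideanSpace ℝ (Fin n)) :
    ‖gradient f a - gradient f b - μ • (a - b)‖ ^ 2
      ≤ 2 * (L - μ) * (f a - f b - ⟪gradient f b, a - b⟫_ℝ - μ / 2 * ‖a - b‖ ^ 2) := by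
  have hd0 : (0:ℝ) < L - μ := by linarith
  set ga := gradient f a with hga
  set gb := gradient f b with hgb
  set G : EuclideanSpace ℝ (Fin n) := ga - gb - μ • (a - b) with hG
  set c : ℝ := 1 / (L - μ) with hc
  have hcd : c * (L - μ) = 1 := by
    rw [hc]; field_simp
  set z : EuclideanSpace ℝ (Fin n) := a - c • G with hz
  have h1 := hsc z b
  have h2 := descent_lemma f L (by linarith) hdiff hsmooth a z
  rw [← hga] at h2
  rw [← hgb] at h1
  have hza : z - a = -(c • G) := by rw [hz]; abel
  have hzb : z - b = (a - b) - c • G := by rw [hz]; abel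
  rw [hza] at h2
  rw [hzb] at h1
  have e2a : ⟪ga, -(c • G)⟫_ℝ = -(c * ⟪ga, G⟫_ℝ) := by
    rw [inner_neg_right, real_inner_smul_right]
  have e2b : ‖-(c • G)‖ ^ 2 = c ^ 2 * ‖G‖ ^ 2 := by
    rw [norm_neg, norm_smul, Real.norm_eq_abs, mul_pow, sq_abs]
  have e1a : ⟪gb, a - b - c • G⟫_ℝ = ⟪gb, a - b⟫_ℝ - c * ⟪gb, G⟫_ℝ := by
    rw [inner_sub_right, real_inner_smul_right]
  have e1b : ‖a - b - c • G‖ ^ 2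
      = ‖a - b‖ ^ 2 - 2 * (c * ⟪a - b, G⟫_ℝ) + c ^ 2 * ‖G‖ ^ 2 := by
    rw [norm_sub_sq_real, real_inner_smul_right, norm_smul, Real.norm_eq_abs, mul_pow, sq_abs]
  rw [e2a, e2b] at h2
  rw [e1a, e1b] at h1
  have hkey : ⟪ga, G⟫_ℝ - ⟪gb, G⟫_ℝ - μ * ⟪a - b, G⟫_ℝ = ‖G‖ ^ 2 := by
    rw [← real_inner_self_eq_norm_sq]
    conv_lhs => rw [← real_inner_smul_left (a - b) G μ]
    rw [← inner_sub_left, ← inner_sub_left, ← hG]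
  have hkeyc : c * (⟪ga, G⟫_ℝ - ⟪gb, G⟫_ℝ - μ * ⟪a - b, G⟫_ℝ) = c * ‖G‖ ^ 2 := by
    rw [hkey]
  have hc2 : (L - μ) * c ^ 2 = c := by
    rw [hc]; field_simp
  have hc2X : (L - μ) * c ^ 2 * ‖G‖ ^ 2 = c * ‖G‖ ^ 2 := by rw [hc2]
  have hgoal : c / 2 * ‖G‖ ^ 2
      ≤ f a - f b - ⟪gb, a - b⟫_ℝ - μ / 2 * ‖a - b‖ ^ 2 := by nlinarith [h1, h2]
  have hmul := mul_le_mul_of_nonneg_left hgoal (by linarith : (0:ℝ) ≤ 2 * (L - μ))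
  have hxx : 2 * (L - μ) * (c / 2 * ‖G‖ ^ 2) = ‖G‖ ^ 2 := by
    rw [hc]; field_simp
  rw [hxx] at hmul
  exact hmul

end Helpers

set_option maxHeartbeats 2000000 in
/-- Convergence of one step of steepest descent with exact line search along a
direction `d_k` whose angle `θ_k` with the gradient satisfies `|sin θ_k| ≤ ε`:
the function-value gap contracts by `((1 − q_ε)/(1 + q_ε))²` with
`q_ε = μ(1 − ε)/(L(1 + ε))`. -/
theorem descent_exact_line_search_angle_condition
    (n : ℕ) (μ L ε : ℝ) (hμ : 0 < μ) (hμL : μ < L) (hε0 : 0 ≤ ε) (hε1 : ε < 1)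
    (f : EuclideanSpace ℝ (Fin n) → ℝ)
    (hdiff : Differentiable ℝ f)
    (hsmooth : ∀ a b, ‖gradient f a - gradient f b‖ ≤ L * ‖a - b‖)
    (hsc : ∀ a b, f a ≥ f b + ⟪gradient f b, a - b⟫_ℝ + μ / 2 * ‖a - b‖ ^ 2)
    (xstar : EuclideanSpace ℝ (Fin n)) (hmin : ∀ y, f xstar ≤ f y)
    (xk dk : EuclideanSpace ℝ (Fin n))
    (hg : gradient f xk ≠ 0) (hd : dk ≠ 0)
    (hangle : 1 - ⟪gradient f xk, dk⟫_ℝ ^ 2 / (‖gradient f xk‖ ^ 2 * ‖dk‖ ^ 2) ≤ ε ^ 2)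
    (γk : ℝ) (hls : ∀ t : ℝ, f (xk - γk • dk) ≤ f (xk - t • dk))
    (xk1 : EuclideanSpace ℝ (Fin n)) (hxk1 : xk1 = xk - γk • dk)
    (qε : ℝ) (hqε : qε = μ * (1 - ε) / (L * (1 + ε))) :
    f xk1 - f xstar ≤ ((1 - qε) / (1 + qε)) ^ 2 * (f xk - f xstar) := by
  have hL : (0:ℝ) < L := lt_trans hμ hμL
  have hLμ : (0:ℝ) < L - μ := by linarith
  have h1e : (0:ℝ) < 1 + ε := by linarith
  have h1e' : (0:ℝ) < 1 - ε := by linarith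
  have hNN : (0:ℝ) < L * (1 + ε) - μ * (1 - ε) := by nlinarith
  have hDD : (0:ℝ) < L * (1 + ε) + μ * (1 - ε) := by nlinarith
  set g1 : EuclideanSpace ℝ (Fin n) := gradient f xk with hg1
  set g2 : EuclideanSpace ℝ (Fin n) := gradient f xk1 with hg2
  -- gradient vanishes at the minimizer
  have hstar : gradient f xstar = 0 := by
    have hloc : IsLocalMin f xstar := Filter.Eventually.of_forall hmin
    have h0 : fderiv ℝ f xstar = 0 := hloc.fderiv_eq_zero
    unfold gradient
    rw [h0]
    exact map_zero _
  -- exact line search gives orthogonality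
  have hZdk : ⟪g2, dk⟫_ℝ = 0 := by
    have hline : ∀ t : ℝ, xk + t • (-dk) = xk - t • dk := by
      intro t; rw [smul_neg, ← sub_eq_add_neg]
    have hloc : IsLocalMin (fun t : ℝ => f (xk + t • (-dk))) γk := by
      apply Filter.Eventually.of_forall
      intro t
      simp only [hline]
      exact hls t
    have hder := hasDerivAt_line f hdiff xk (-dk) γk
    have h0 := hloc.hasDerivAt_eq_zero hder
    rw [hline, ← hxk1] at h0
    rw [inner_neg_right] at h0
    rw [← hg2] at h0
    linarith [h0]
  have hv : xk1 - xk = -(γk • dk) := by rw [hxk1]; abel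
  have hZ : ⟪g2, xk1 - xk⟫_ℝ = 0 := by
    rw [hv, inner_neg_right, real_inner_smul_right, hZdk, mul_zero, neg_zero]
  -- Cauchy–Schwarz with the angle condition
  have hdknz : (0:ℝ) < ‖dk‖ ^ 2 := by
    have := norm_pos_iff.2 hd
    positivity
  have hg1nz : (0:ℝ) < ‖g1‖ ^ 2 := by
    have := norm_pos_iff.2 hg
    positivity
  have hCS : ⟪g1, g2⟫_ℝ ≤ ε * ‖g1‖ * ‖g2‖ := by
    set IP : ℝ := ⟪g1, dk⟫_ℝ with hIP
    set p : ℝ := IP / ‖dk‖ ^ 2 with hp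
    set r : EuclideanSpace ℝ (Fin n) := g1 - p • dk with hr
    set GN : ℝ := ‖g1‖ with hGN
    set DN : ℝ := ‖dk‖ with hDN
    have hDN0 : DN ≠ 0 := by rw [hDN]; exact norm_ne_zero_iff.2 hd
    have hGN0 : GN ≠ 0 := by rw [hGN]; exact norm_ne_zero_iff.2 hg
    have hr2 : ‖r‖ ^ 2 = GN ^ 2 - IP ^ 2 / DN ^ 2 := by
      rw [hr, norm_sub_sq_real, real_inner_smul_right, norm_smul, Real.norm_eq_abs,
        mul_pow, sq_abs, ← hIP, ← hGN, ← hDN, hp]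
      field_simp
      ring
    have hr2' : ‖r‖ ^ 2 ≤ ε ^ 2 * GN ^ 2 := by
      have hX : IP ^ 2 / (GN ^ 2 * DN ^ 2) * GN ^ 2 = IP ^ 2 / DN ^ 2 := by
        field_simp
      have h2 := mul_le_mul_of_nonneg_right hangle (le_of_lt hg1nz)
      rw [hr2]
      nlinarith [h2, hX]
    have hrn : ‖r‖ ≤ ε * GN := by
      have hr2'' : ‖r‖ ^ 2 ≤ (ε * GN) ^ 2 := by rw [mul_pow]; exact hr2'
      exact (pow_le_pow_iff_left₀ (norm_nonneg r)
        (mul_nonneg hε0 (norm_nonneg g1)) two_ne_zero).mp hr2'' 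
    have hZdk' : ⟪dk, g2⟫_ℝ = 0 := by rw [real_inner_comm]; exact hZdk
    have hip : ⟪g1, g2⟫_ℝ = ⟪r, g2⟫_ℝ := by
      rw [hr, inner_sub_left, real_inner_smul_left, hZdk', mul_zero, sub_zero]
    calc ⟪g1, g2⟫_ℝ = ⟪r, g2⟫_ℝ := hip
      _ ≤ ‖r‖ * ‖g2‖ := real_inner_le_norm _ _
      _ ≤ ε * GN * ‖g2‖ := mul_le_mul_of_nonneg_right hrn (norm_nonneg g2)
  -- the three interpolation inequalities
  have hS1 := interp_ineq f μ L hμ hμL hdiff hsmooth hsc xstar xk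
  have hS2 := interp_ineq f μ L hμ hμL hdiff hsmooth hsc xstar xk1
  have hS3 := interp_ineq f μ L hμ hμL hdiff hsmooth hsc xk xk1
  rw [hstar] at hS1 hS2
  rw [← hg1] at hS1 hS3
  rw [← hg2] at hS2 hS3
  -- the combined angle/orthogonality scalar inequality
  have hK2 : 0 ≤ ε * ((L * (1 + ε) - μ * (1 - ε)) ^ 2 * ‖g1‖ ^ 2
      + (L * (1 + ε) + μ * (1 - ε)) ^ 2 * ‖g2‖ ^ 2)
      - 2 * (L * (1 + ε) + μ * (1 - ε)) * (L * (1 + ε) - μ * (1 - ε)) * ⟪g1, g2⟫_ℝ := by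
    have hAM : 0 ≤ ε * ((L * (1 + ε) - μ * (1 - ε)) * ‖g1‖
        - (L * (1 + ε) + μ * (1 - ε)) * ‖g2‖) ^ 2 := mul_nonneg hε0 (sq_nonneg _)
    have h2dn : 0 ≤ 2 * (L * (1 + ε) + μ * (1 - ε)) * (L * (1 + ε) - μ * (1 - ε))
        * (ε * ‖g1‖ * ‖g2‖ - ⟪g1, g2⟫_ℝ) := by
      apply mul_nonneg
      · positivity
      · linarith
    linarith [hAM, h2dn]
  clear_value g1 g2
  clear hZdk hCS hv hstar hangle hxk1 hls hmin hsc hsmooth hdiff hd hg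
  -- nonnegative multiples of all the facts
  have t1 : 0 ≤ ((1 + ε) * (2 * (μ * (1 - ε)) * (L * (1 + ε) - μ * (1 - ε)) ^ 2)) *
      (2 * (L - μ) * (f xstar - f xk - ⟪g1, xstar - xk⟫_ℝ - μ / 2 * ‖xstar - xk‖ ^ 2)
        - ‖0 - g1 - μ • (xstar - xk)‖ ^ 2) := by
    apply mul_nonneg (by positivity)
    linarith [hS1]
  have t2 : 0 ≤ ((1 + ε) * (2 * (μ * (1 - ε)) * (L * (1 + ε) + μ * (1 - ε))
      * (L * (1 + ε) - μ * (1 - ε)))) *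
      (2 * (L - μ) * (f xstar - f xk1 - ⟪g2, xstar - xk1⟫_ℝ - μ / 2 * ‖xstar - xk1‖ ^ 2)
        - ‖0 - g2 - μ • (xstar - xk1)‖ ^ 2) := by
    apply mul_nonneg (by positivity)
    linarith [hS2]
  have t3 : 0 ≤ ((1 + ε) * ((L * (1 + ε) + μ * (1 - ε))
      * (L * (1 + ε) - μ * (1 - ε)) ^ 2)) *
      (2 * (L - μ) * (f xk - f xk1 - ⟪g2, xk - xk1⟫_ℝ - μ / 2 * ‖xk - xk1‖ ^ 2)
        - ‖g1 - g2 - μ • (xk - xk1)‖ ^ 2) := by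
    apply mul_nonneg (by positivity)
    linarith [hS3]
  have t4 : ((1 + ε) * (2 * (L - μ) * ((L * (1 + ε) + μ * (1 - ε)) ^ 2
      * (L * (1 + ε) - μ * (1 - ε))))) * ⟪g2, xk1 - xk⟫_ℝ = 0 := by
    rw [hZ, mul_zero]
  have t5 : 0 ≤ ((1 + ε) * (2 * (L - μ))) *
      (ε * ((L * (1 + ε) - μ * (1 - ε)) ^ 2 * ‖g1‖ ^ 2
        + (L * (1 + ε) + μ * (1 - ε)) ^ 2 * ‖g2‖ ^ 2)
      - 2 * (L * (1 + ε) + μ * (1 - ε)) * (L * (1 + ε) - μ * (1 - ε)) * ⟪g1, g2⟫_ℝ) := by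
    apply mul_nonneg (by positivity) hK2
  have t6 : 0 ≤ ((L * (1 + ε) - μ * (1 - ε)) * (1 - ε)) *
      ‖(2 * μ * L * (1 + ε)) • (xk - xstar)
        + ((L * (1 + ε) + μ * (1 - ε)) * μ) • (xk1 - xk)
        - (L * (1 + ε) - μ * (1 - ε)) • g1
        - (L * (1 + ε) + μ * (1 - ε)) • g2‖ ^ 2 := by
    apply mul_nonneg (by positivity) (sq_nonneg _)
  have t7 : 0 ≤ μ * ‖((L * (1 + ε) - μ * (1 - ε)) * (L * (1 + ε) + μ * (1 - ε))) • (xk1 - xk)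
        + (2 * (L * (1 + ε) - μ * (1 - ε))) • g1
        - (2 * ε * (L * (1 + ε) + μ * (1 - ε))) • g2‖ ^ 2 := by
    apply mul_nonneg (le_of_lt hμ) (sq_nonneg _)
  -- expand every inner product / norm into primitive atoms
  simp only [← real_inner_self_eq_norm_sq, inner_sub_left, inner_sub_right, inner_add_left,
    inner_add_right, real_inner_smul_left, real_inner_smul_right, inner_zero_left,
    inner_zero_right, real_inner_comm xk1 xk, real_inner_comm xstar xk,
    real_inner_comm xstar xk1, real_inner_comm g1 xk, real_inner_comm g1 xk1,
    real_inner_comm g1 xstar, real_inner_comm g2 xk, real_inner_comm g2 xk1,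
    real_inner_comm g2 xstar, real_inner_comm g2 g1] at t1 t2 t3 t4 t5 t6 t7
  have hMain : 0 ≤ ((1 + ε) * (2 * (L - μ) * (L * (1 + ε) - μ * (1 - ε)))) *
      ((L * (1 + ε) - μ * (1 - ε)) ^ 2 * (f xk - f xstar)
        - (L * (1 + ε) + μ * (1 - ε)) ^ 2 * (f xk1 - f xstar)) := by
    linarith [t1, t2, t3, t4, t5, t6, t7]
  -- conclude
  have hC : (0:ℝ) < (1 + ε) * (2 * (L - μ) * (L * (1 + ε) - μ * (1 - ε))) := by positivity
  have hX : 0 ≤ (L * (1 + ε) - μ * (1 - ε)) ^ 2 * (f xk - f xstar)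
      - (L * (1 + ε) + μ * (1 - ε)) ^ 2 * (f xk1 - f xstar) :=
    (mul_nonneg_iff_of_pos_left hC).mp hMain
  have hq : (1 - qε) / (1 + qε) = (L * (1 + ε) - μ * (1 - ε)) / (L * (1 + ε) + μ * (1 - ε)) := by
    rw [hqε]
    have hP : L * (1 + ε) ≠ 0 := by positivity
    field_simp
  rw [hq, div_pow, div_mul_eq_mul_div, le_div_iff₀ (by positivity)]
  linarith [hX]
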